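/- Let K be a compact topological space, u : K → ℝ upper semicontinuous, v : K → ℝ lower semicontinuous with v > 0 on K, and suppose u(x₀) > 0 for some x₀ ∈ K. Define τ = inf{ t ∈ ℝ : u(x) < t·v(x) for all x ∈ K }. Then τ is well defined and finite, τ > 0, u(x) ≤ τ·v(x) for all x ∈ K, and there exists a point x̄ ∈ K with u(x̄) = τ·v(x̄). -/

import Mathlib

/-!
The slopes `t` with `u < t * v` are exactly those exceeding `u / v` everywhere, so `τ` is the
maximum of `u / v`, and the claim is that this maximum is attained. The quotient need not be
upper semicontinuous where `u < 0`, but its positive part is: `{u / v < c} = {u < c * v}` is open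
for `c > 0`. Its maximum on the compact space is positive because `u x₀ > 0`, so it is a maximum
of `u / v` itself.
-/

open Set

section Semicontinuity

variable {K : Type*} [TopologicalSpace K] {u v : K → ℝ}

lemma isOpen_setOf_lt_const_mul (hu : UpperSemicontinuous u) (hv : LowerSemicontinuous v)
    {s : ℝ} (hs : 0 < s) : IsOpen {y | u y < s * v y} := by
  refine isOpen_iff_mem_nhds.2 fun x (hx : u x < s * v x) => ?_
  obtain ⟨c, huc, hcv⟩ := exists_between hx
  have hcv' : c / s < v x := by rwa [div_lt_iff₀' hs]
  filter_upwards [hu x c huc, hv x (c / s) hcv'] with y huy hvy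
  calc u y < c := huy
    _ = s * (c / s) := by field_simp
    _ < s * v y := mul_lt_mul_of_pos_left hvy hs

lemma upperSemicontinuous_max_div_zero (hu : UpperSemicontinuous u)
    (hv : LowerSemicontinuous v) (hvpos : ∀ x, 0 < v x) :
    UpperSemicontinuous fun x => max (u x / v x) 0 := by
  refine upperSemicontinuous_iff_isOpen_preimage.2 fun c => ?_
  rcases le_or_gt c 0 with hc | hc
  · convert isOpen_empty
    exact eq_empty_of_forall_notMem fun x hx => (le_max_right _ _).not_gt (hx.trans_le hc)
  · convert isOpen_setOf_lt_const_mul hu hv hc using 1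
    ext x
    change max _ _ < c ↔ _
    rw [max_lt_iff, and_iff_left hc, div_lt_iff₀ (hvpos x)]
    exact Iff.rfl

lemma exists_forall_div_le_of_semicontinuous [CompactSpace K] (hu : UpperSemicontinuous u)
    (hv : LowerSemicontinuous v) (hvpos : ∀ x, 0 < v x) {x₀ : K} (hx₀ : 0 < u x₀) :
    ∃ z, ∀ x, u x / v x ≤ u z / v z := by
  obtain ⟨z, -, hmax⟩ := (upperSemicontinuous_max_div_zero hu hv hvpos).upperSemicontinuousOn
    univ |>.exists_isMaxOn ⟨x₀, mem_univ _⟩ isCompact_univ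
  have hle : ∀ x, u x / v x ≤ max (u z / v z) 0 := fun x =>
    (le_max_left _ _).trans (hmax (mem_univ x))
  have hz : 0 < u z / v z :=
    (lt_max_iff.1 ((div_pos hx₀ (hvpos x₀)).trans_le (hle x₀))).resolve_right (lt_irrefl 0)
  exact ⟨z, fun x => (hle x).trans_eq (max_eq_left hz.le)⟩

end Semicontinuity

/-- The sliding lemma: the least t with u < t·v everywhere gives a touching point. -/
theorem sliding_lemma {K : Type*} [TopologicalSpace K] [CompactSpace K]
    (u v : K → ℝ) (hu : UpperSemicontinuous u) (hv : LowerSemicontinuous v)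
    (hvpos : ∀ x, 0 < v x) (x₀ : K) (hx₀ : 0 < u x₀) :
    let S : Set ℝ := { t : ℝ | ∀ x, u x < t * v x }
    let τ : ℝ := sInf S
    S.Nonempty ∧ BddBelow S ∧ 0 < τ ∧ (∀ x, u x ≤ τ * v x) ∧
      ∃ x, u x = τ * v x := by
  intro S τ
  obtain ⟨z, hz⟩ := exists_forall_div_le_of_semicontinuous hu hv hvpos hx₀
  have hS : S = Ioi (u z / v z) := by
    ext t
    exact ⟨fun h => (div_lt_iff₀ (hvpos z)).2 (h z),
      fun h x => (div_lt_iff₀ (hvpos x)).1 ((hz x).trans_lt h)⟩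
  have hτ : τ = u z / v z := by simp only [τ, hS, csInf_Ioi]
  refine ⟨hS ▸ nonempty_Ioi, hS ▸ bddBelow_Ioi, ?_, fun x => ?_, z, ?_⟩
  · exact hτ ▸ (div_pos hx₀ (hvpos x₀)).trans_le (hz x₀)
  · exact (div_le_iff₀ (hvpos x)).1 (hτ ▸ hz x)
  · rw [hτ, div_mul_cancel₀ _ (hvpos z).ne']
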